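/- arXiv:2605.21718 — 3 statements merged into one kernel-verified Lean document; each statement's English description precedes it below -/
import Mathlib

section
/- For every integer n ≥ 1, the polynomials num_B(n,x) and den_B(n,x) are coprime in ℤ[x], i.e. gcd(num_B(n,x), den_B(n,x)) = 1. -/
open Polynomial Finset
open scoped Classical

/-- The binary partitions of `n`: partitions of `n` all of whose parts are powers of `2`. -/
noncomputable def binParts (n : ℕ) : Finset (Nat.Partition n) :=
  Finset.univ.filter (fun μ => ∀ i ∈ μ.parts, ∃ k : ℕ, i = 2 ^ k)

/-- `h_{B,λ}(x) = ∏_{k ≥ 0, 2^k ≤ n} (1+x^{2^k})^(⌊n/2^k⌋ - m_λ(2^k))` in `ℤ[x]`. -/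
noncomputable def hB (n : ℕ) (μ : Nat.Partition n) : Polynomial ℤ :=
  ∏ k ∈ (Finset.range (n + 1)).filter (fun k => 2 ^ k ≤ n),
    (1 + X ^ (2 ^ k)) ^ (n / 2 ^ k - μ.parts.count (2 ^ k))

/-- `G_B(n,x)`: the (normalized) gcd of the `h_{B,λ}(x)` over binary partitions `λ` of `n`. -/
noncomputable def GB (n : ℕ) : Polynomial ℤ :=
  (binParts n).gcd (hB n)

theorem GB_dvd_sum (n : ℕ) :
    ∃ q : Polynomial ℤ, (∑ μ ∈ binParts n, hB n μ) = GB n * q :=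
  exists_eq_mul_right_of_dvd (Finset.dvd_sum fun _ hμ => Finset.gcd_dvd hμ)

/-- `num_B(n,x) = (∑_{λ binary partition of n} h_{B,λ}(x)) / G_B(n,x)`. -/
noncomputable def numB (n : ℕ) : Polynomial ℤ :=
  (GB_dvd_sum n).choose

/-- The all-ones partition of `n`. -/
def onesPartition (n : ℕ) : Nat.Partition n :=
  Nat.Partition.ofSums n (Multiset.replicate n 1) (by simp)

theorem onesPartition_mem_binParts (n : ℕ) : onesPartition n ∈ binParts n := by
  simp only [binParts, Finset.mem_filter, Finset.mem_univ, true_and]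
  intro i hi
  have h1 : i = 1 := by
    rw [onesPartition, Nat.Partition.ofSums_parts] at hi
    exact Multiset.eq_of_mem_replicate (Multiset.mem_filter.mp hi).1
  exact ⟨0, by simp [h1]⟩

theorem GB_dvd_prod (n : ℕ) :
    ∃ q : Polynomial ℤ,
      (∏ k ∈ (Finset.range (n + 1)).filter (fun k => 2 ^ k ≤ n),
          ((1 : Polynomial ℤ) + X ^ (2 ^ k)) ^ (n / 2 ^ k)) = GB n * q :=
  exists_eq_mul_right_of_dvd <|
    dvd_trans (Finset.gcd_dvd (onesPartition_mem_binParts n))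
      (Finset.prod_dvd_prod_of_dvd _ _ fun _ _ => pow_dvd_pow _ (Nat.sub_le _ _))

/-- `den_B(n,x) = (∏_{k ≥ 0, 2^k ≤ n} (1+x^{2^k})^⌊n/2^k⌋) / G_B(n,x)`. -/
noncomputable def denB (n : ℕ) : Polynomial ℤ :=
  (GB_dvd_prod n).choose

/-!
Every irreducible factor of `denB n` is one of the cyclotomic polynomials
`1 + X ^ 2 ^ k = Φ_{2 ^ (k + 1)}` with `2 ^ k ≤ n`, so it suffices that `∑_λ hB n λ` does not
vanish at `ζ = ω ^ 2`, `ω = exp (π i / 2 ^ (k + 1))`. Since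
`1 + ω ^ (2 ^ (j + 1)) = ω ^ 2 ^ j * 2 cos (2 ^ j π / 2 ^ (k + 1))` and the parts of a binary
partition add up to `n`, `ω ^ n * hB n λ (ζ)` is a fixed power of `ω` times a real number `R_λ`.
`R_λ` vanishes unless `λ` has `⌊n / 2 ^ k⌋` parts `2 ^ k`; such a `λ` has no larger parts, its
factors with `j < k` are positive and those with `j > k` do not depend on `λ`. So all nonzero
`R_λ` have the same sign, and `⌊n / 2 ^ k⌋` parts `2 ^ k` padded with ones give a nonzero one.
-/

def binExps (n : ℕ) : Finset ℕ :=
  (Finset.range (n + 1)).filter (fun k => 2 ^ k ≤ n)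

theorem mem_binExps {n k : ℕ} : k ∈ binExps n ↔ 2 ^ k ≤ n := by
  simp only [binExps, Finset.mem_filter, Finset.mem_range, and_iff_right_iff_imp]
  intro hk
  have := k.lt_two_pow_self
  omega

namespace Nat.Partition

variable {n : ℕ}

theorem sum_count_mul_le (μ : n.Partition) (s : Finset ℕ) :
    ∑ a ∈ s, μ.parts.count a * a ≤ n := by
  calc ∑ a ∈ s, μ.parts.count a * a
      ≤ ∑ a ∈ s ∪ μ.parts.toFinset, μ.parts.count a * a :=
        Finset.sum_le_sum_of_subset Finset.subset_union_left
    _ = n := by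
      conv_rhs => rw [← μ.parts_sum]
      rw [Finset.sum_multiset_count_of_subset _ _ Finset.subset_union_right]
      rfl

theorem count_le_div (μ : n.Partition) {a : ℕ} (ha : 0 < a) : μ.parts.count a ≤ n / a :=
  (Nat.le_div_iff_mul_le ha).mpr (by simpa using μ.sum_count_mul_le {a})

theorem count_eq_zero_of_count_eq_div (μ : n.Partition) {a b : ℕ} (ha : 0 < a) (hab : a < b)
    (h : μ.parts.count a = n / a) : μ.parts.count b = 0 := by
  have hle := μ.sum_count_mul_le {a, b}
  rw [Finset.sum_pair hab.ne, h] at hle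
  have := Nat.div_add_mod n a
  have := Nat.mod_lt n ha
  by_contra hb
  nlinarith [Nat.one_le_iff_ne_zero.mpr hb]

def ofDivMod (n a : ℕ) : n.Partition where
  parts := Multiset.replicate (n / a) a + Multiset.replicate (n % a) 1
  parts_pos {i} hi := by
    rcases Multiset.mem_add.mp hi with hi | hi
    · obtain ⟨hna, rfl⟩ := Multiset.mem_replicate.mp hi
      exact Nat.pos_of_ne_zero fun h => hna (by simp [h])
    · simp [Multiset.eq_of_mem_replicate hi]
  parts_sum := by simp [Nat.div_add_mod']

theorem count_ofDivMod (n a : ℕ) : (ofDivMod n a).parts.count a = n / a := by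
  rcases eq_or_ne a 1 with rfl | ha
  · simp [ofDivMod, Nat.mod_one]
  · simp [ofDivMod, Multiset.count_replicate, ha.symm]

theorem sum_count_two_pow_mul {μ : n.Partition} (hμ : μ ∈ binParts n) :
    ∑ j ∈ binExps n, μ.parts.count (2 ^ j) * 2 ^ j = n := by
  have hsub : μ.parts.toFinset ⊆ (binExps n).image (2 ^ ·) := by
    intro a ha
    rw [Multiset.mem_toFinset] at ha
    obtain ⟨j, rfl⟩ := (Finset.mem_filter.mp hμ).2 a ha
    exact Finset.mem_image_of_mem _ (mem_binExps.mpr (μ.le_of_mem_parts ha))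
  conv_rhs => rw [← μ.parts_sum, Finset.sum_multiset_count_of_subset _ _ hsub]
  rw [Finset.sum_image fun _ _ _ _ h => Nat.pow_right_injective le_rfl h]
  rfl

theorem ofDivMod_mem_binParts (n k : ℕ) : ofDivMod n (2 ^ k) ∈ binParts n := by
  simp only [binParts, Finset.mem_filter, Finset.mem_univ, true_and]
  intro i hi
  rcases Multiset.mem_add.mp hi with hi | hi
  · exact ⟨k, Multiset.eq_of_mem_replicate hi⟩
  · exact ⟨0, Multiset.eq_of_mem_replicate hi⟩

end Nat.Partition

theorem prod_pow_mul_prod_pow_pos {ι R : Type*} [CommRing R] [LinearOrder R]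
    [IsStrictOrderedRing R] {s : Finset ι} {f : ι → R} {e e' : ι → ℕ}
    (h : ∀ i ∈ s, 0 < f i ∨ e i = e' i ∧ f i ^ e i ≠ 0) :
    0 < (∏ i ∈ s, f i ^ e i) * ∏ i ∈ s, f i ^ e' i := by
  rw [← prod_mul_distrib]
  refine prod_pos fun i hi => ?_
  rcases h i hi with hf | ⟨he, hne⟩
  · positivity
  · rw [← he]
    exact mul_self_pos.mpr hne

open Complex
open scoped Real

theorem one_add_exp_mul_I_sq (a : ℝ) :
    1 + exp (a * I) ^ 2 = exp (a * I) * (2 * Real.cos a : ℝ) := by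
  push_cast
  rw [two_cos, mul_add, ← exp_add, ← exp_add, neg_mul, add_neg_cancel, exp_zero, exp_add]
  ring

theorem cos_two_pow_mul_pi_div_pos {j k : ℕ} (h : j < k) :
    0 < Real.cos (2 ^ j * (π / 2 ^ (k + 1))) := by
  have hangle : 2 ^ j * (π / 2 ^ (k + 1)) = π / 2 * (2 ^ j / 2 ^ k) := by
    rw [pow_succ]
    field_simp
  have hlt : (2 : ℝ) ^ j / 2 ^ k < 1 :=
    (div_lt_one (by positivity)).mpr (pow_lt_pow_right₀ one_lt_two h)
  have hpos : 0 < 2 ^ j * (π / 2 ^ (k + 1)) := by positivity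
  refine Real.cos_pos_of_mem_Ioo ⟨by linarith [Real.pi_pos], ?_⟩
  rw [hangle]
  exact mul_lt_of_lt_one_right Real.pi_div_two_pos hlt

theorem cos_two_pow_mul_pi_div_self (k : ℕ) : Real.cos (2 ^ k * (π / 2 ^ (k + 1))) = 0 := by
  rw [pow_succ, ← Real.cos_pi_div_two]
  congr 1
  field_simp

theorem cos_two_pow_mul_pi_div_ne_zero {j k : ℕ} (h : k < j) :
    Real.cos (2 ^ j * (π / 2 ^ (k + 1))) ≠ 0 := by
  obtain ⟨d, rfl⟩ := Nat.exists_eq_add_of_lt h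
  have : (2 : ℝ) ^ (k + d + 1) * (π / 2 ^ (k + 1)) = ((2 ^ d : ℕ) : ℝ) * π := by
    rw [show k + d + 1 = d + (k + 1) by ring, pow_add]
    push_cast
    field_simp
  rw [this, Real.cos_nat_mul_pi]
  exact pow_ne_zero _ (by norm_num)

noncomputable def hBCos (n : ℕ) (θ : ℝ) (μ : n.Partition) : ℝ :=
  ∏ j ∈ binExps n, (2 * Real.cos (2 ^ j * θ)) ^ (n / 2 ^ j - μ.parts.count (2 ^ j))

section hBCos

variable {n : ℕ}

theorem exp_pow_mul_aeval_hB (θ : ℝ) {μ : n.Partition} (hμ : μ ∈ binParts n) :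
    exp (θ * I) ^ n * aeval (exp (θ * I) ^ 2) (hB n μ) =
      exp (θ * I) ^ (∑ j ∈ binExps n, n / 2 ^ j * 2 ^ j) * hBCos n θ μ := by
  have hfactor (j : ℕ) : 1 + (exp (θ * I) ^ 2) ^ 2 ^ j =
      exp (θ * I) ^ 2 ^ j * (2 * Real.cos (2 ^ j * θ) : ℝ) := by
    have hpow : exp (θ * I) ^ 2 ^ j = exp ((2 ^ j * θ : ℝ) * I) := by
      rw [← exp_nat_mul]
      push_cast
      ring_nf
    rw [← pow_mul, mul_comm 2, pow_mul, hpow, one_add_exp_mul_I_sq]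
  conv_lhs => enter [1, 2]; rw [← μ.sum_count_two_pow_mul hμ]
  simp only [hB, hBCos, binExps, map_prod, map_pow, map_add, map_one, aeval_X, hfactor,
    ofReal_prod, ofReal_pow]
  rw [← prod_pow_eq_pow_sum, ← prod_pow_eq_pow_sum, ← prod_mul_distrib, ← prod_mul_distrib]
  refine prod_congr rfl fun j _ => ?_
  rw [mul_pow, ← pow_mul, ← mul_assoc, ← pow_add, mul_comm (2 ^ j), ← add_mul,
    Nat.add_sub_cancel' (μ.count_le_div (by positivity))]

theorem hBCos_eq_zero {k : ℕ} (hk : k ∈ binExps n) {μ : n.Partition}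
    (h : μ.parts.count (2 ^ k) ≠ n / 2 ^ k) : hBCos n (π / 2 ^ (k + 1)) μ = 0 := by
  refine prod_eq_zero hk ?_
  have := μ.count_le_div (a := 2 ^ k) (by positivity)
  rw [cos_two_pow_mul_pi_div_self, mul_zero, zero_pow (by omega)]

theorem hBCos_mul_hBCos_pos {k : ℕ} {μ ν : n.Partition} (hμ : μ.parts.count (2 ^ k) = n / 2 ^ k)
    (hν : ν.parts.count (2 ^ k) = n / 2 ^ k) :
    0 < hBCos n (π / 2 ^ (k + 1)) μ * hBCos n (π / 2 ^ (k + 1)) ν := by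
  refine prod_pow_mul_prod_pow_pos fun j _ => ?_
  rcases lt_trichotomy j k with hjk | rfl | hkj
  · exact .inl (mul_pos two_pos (cos_two_pow_mul_pi_div_pos hjk))
  · exact .inr ⟨by rw [hμ, hν], by simp [hμ]⟩
  · have hlt : 2 ^ k < 2 ^ j := Nat.pow_lt_pow_right one_lt_two hkj
    refine .inr ⟨?_, pow_ne_zero _ (mul_ne_zero two_ne_zero (cos_two_pow_mul_pi_div_ne_zero hkj))⟩
    rw [μ.count_eq_zero_of_count_eq_div (by positivity) hlt hμ,
      ν.count_eq_zero_of_count_eq_div (by positivity) hlt hν]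

-- Multiplied by the term of `ofDivMod n (2 ^ k)`, every term is nonnegative and that one positive.
theorem sum_hBCos_ne_zero {k : ℕ} (hk : k ∈ binExps n) :
    ∑ μ ∈ binParts n, hBCos n (π / 2 ^ (k + 1)) μ ≠ 0 := by
  have hν := Nat.Partition.count_ofDivMod n (2 ^ k)
  have hpos : 0 < ∑ μ ∈ binParts n,
      hBCos n (π / 2 ^ (k + 1)) μ * hBCos n (π / 2 ^ (k + 1)) (.ofDivMod n (2 ^ k)) := by
    refine sum_pos' (fun μ _ => ?_)
      ⟨_, Nat.Partition.ofDivMod_mem_binParts n k, hBCos_mul_hBCos_pos hν hν⟩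
    by_cases hμ : μ.parts.count (2 ^ k) = n / 2 ^ k
    · exact (hBCos_mul_hBCos_pos hμ hν).le
    · rw [hBCos_eq_zero hk hμ, zero_mul]
  rw [← sum_mul] at hpos
  exact left_ne_zero_of_mul hpos.ne'

theorem not_one_add_X_pow_two_pow_dvd_sum_hB {k : ℕ} (hk : k ∈ binExps n) :
    ¬ (1 + X ^ 2 ^ k ∣ ∑ μ ∈ binParts n, hB n μ) := by
  rintro ⟨q, hq⟩
  set ω := exp ((π / 2 ^ (k + 1) : ℝ) * I)
  have hroot : aeval (ω ^ 2) (1 + X ^ 2 ^ k : ℤ[X]) = 0 := by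
    rw [map_add, map_one, map_pow, aeval_X, ← pow_mul, ← pow_succ', ← exp_nat_mul]
    have hangle : (2 ^ (k + 1) : ℂ) * ((π / 2 ^ (k + 1) : ℝ) * I) = π * I := by
      push_cast
      field_simp
    push_cast at hangle ⊢
    rw [hangle, exp_pi_mul_I]
    ring
  have hsum := congrArg (fun p => ω ^ n * aeval (ω ^ 2) p) hq
  simp only [map_mul, hroot, zero_mul, mul_zero, map_sum, mul_sum] at hsum
  rw [sum_congr rfl fun μ hμ => exp_pow_mul_aeval_hB _ hμ, ← mul_sum, ← ofReal_sum] at hsum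
  exact mul_ne_zero (pow_ne_zero _ (exp_ne_zero _)) (ofReal_ne_zero.mpr (sum_hBCos_ne_zero hk))
    hsum

end hBCos

theorem irreducible_one_add_X_pow_two_pow (k : ℕ) : Irreducible (1 + X ^ 2 ^ k : ℤ[X]) := by
  have : (1 + X ^ 2 ^ k : ℤ[X]) = cyclotomic (2 ^ (k + 1)) ℤ := by
    simp [cyclotomic_prime_pow_eq_geom_sum Nat.prime_two, sum_range_succ]
  exact this ▸ cyclotomic.irreducible (by positivity)

theorem isRelPrime_sum_hB_prod (n : ℕ) :
    IsRelPrime (∑ μ ∈ binParts n, hB n μ) (∏ k ∈ binExps n, (1 + X ^ 2 ^ k) ^ (n / 2 ^ k)) :=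
  IsRelPrime.prod_right fun _ hk => IsRelPrime.pow_right <|
    ((irreducible_one_add_X_pow_two_pow _).isRelPrime_iff_not_dvd.mpr
      (not_one_add_X_pow_two_pow_dvd_sum_hB hk)).symm

theorem gcd_numB_denB_eq_one_general (n : ℕ) :
    gcd (numB n) (denB n) = 1 := by
  have hnum : numB n ∣ ∑ μ ∈ binParts n, hB n μ :=
    Dvd.intro_left _ (GB_dvd_sum n).choose_spec.symm
  have hden : denB n ∣ ∏ k ∈ binExps n, (1 + X ^ 2 ^ k) ^ (n / 2 ^ k) :=
    Dvd.intro_left _ (GB_dvd_prod n).choose_spec.symm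
  rw [← _root_.normalize_gcd, normalize_eq_one, gcd_isUnit_iff_isRelPrime]
  exact ((isRelPrime_sum_hB_prod n).of_dvd_left hnum).of_dvd_right hden

/-- For every integer `n ≥ 1`, the polynomials `num_B(n,x)` and `den_B(n,x)` are coprime
in `ℤ[x]`, i.e. `gcd(num_B(n,x), den_B(n,x)) = 1`. -/
theorem gcd_numB_denB_eq_one (n : ℕ) (hn : 1 ≤ n) :
    gcd (numB n) (denB n) = 1 :=
  gcd_numB_denB_eq_one_general n
end

section
/- Let t(n) := num_T(n,1) for n ≥ 1 and set t(0) := 1. Then t(3n) = t(3n+1) = t(3n+2) for every integer n ≥ 0, and t(3n) − t(3n−2) = 2^{2n}·t(n) for every integer n ≥ 1. -/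
/-!
Evaluate at `x = 1`. Write `S(n) = ∑_{3^k ≤ n} ⌊n/3^k⌋` and `ℓ(λ)` for the number of parts of `λ`.
Since `1 + x` divides every `1 + x^{3^k}`, each `h_{T,λ}` is divisible by `(1+x)^{S(n)-ℓ(λ)}`, so
`(1+x)^{S(n)-n}` divides `G_T`. Conversely `G_T` divides `h_{T,1^n}`, whose value at `1` is
`2^{S(n)-n}`, and `G_T(1) > 0` because `G_T` has positive leading coefficient and divides a
polynomial without roots in `[1, ∞)`. Hence `G_T(1) = 2^{S(n)-n}` and `t(n) = ∑_λ 2^{n-ℓ(λ)}`.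

For this weighted count, removing a part `1` is a weight-preserving bijection onto the ternary
partitions of `n - 1`, and a part `1` is forced unless `3 ∣ n`. The ternary partitions of `3m`
without a part `1` are those of `m` with every part tripled, which multiplies the weight by
`2^{2m}`.
-/

open Polynomial Finset
open scoped Classical

/-- The ternary partitions of `n`: partitions of `n` all of whose parts are powers of `3`. -/
noncomputable def terParts (n : ℕ) : Finset (Nat.Partition n) :=
  Finset.univ.filter (fun μ => ∀ i ∈ μ.parts, ∃ k : ℕ, i = 3 ^ k)

/-- `h_{T,λ}(x) = ∏_{k ≥ 0, 3^k ≤ n} (1+x^{3^k})^(⌊n/3^k⌋ - m_λ(3^k))` in `ℤ[x]`. -/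
noncomputable def hT (n : ℕ) (μ : Nat.Partition n) : Polynomial ℤ :=
  ∏ k ∈ (Finset.range (n + 1)).filter (fun k => 3 ^ k ≤ n),
    (1 + X ^ (3 ^ k)) ^ (n / 3 ^ k - μ.parts.count (3 ^ k))

/-- `G_T(n,x)`: the (normalized) gcd of the `h_{T,λ}(x)` over ternary partitions `λ` of `n`. -/
noncomputable def GT (n : ℕ) : Polynomial ℤ :=
  (terParts n).gcd (hT n)

theorem GT_dvd_sum (n : ℕ) :
    ∃ q : Polynomial ℤ, (∑ μ ∈ terParts n, hT n μ) = GT n * q :=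
  exists_eq_mul_right_of_dvd (Finset.dvd_sum fun _ hμ => Finset.gcd_dvd hμ)

/-- `num_T(n,x) = (∑_{λ ternary partition of n} h_{T,λ}(x)) / G_T(n,x)`. -/
noncomputable def numT (n : ℕ) : Polynomial ℤ :=
  (GT_dvd_sum n).choose

/-- `t(n) := num_T(n,1)` for `n ≥ 1`, with the convention `t(0) := 1`. -/
noncomputable def tT : ℕ → ℤ :=
  fun n => if n = 0 then 1 else Polynomial.eval (1 : ℤ) (numT n)

namespace Nat.Partition

variable {n : ℕ}

theorem card_parts_le (μ : n.Partition) : Multiset.card μ.parts ≤ n := by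
  simpa [μ.parts_sum] using Multiset.card_nsmul_le_sum (a := 1) fun _ hi => μ.parts_pos hi

theorem count_mul_le (μ : n.Partition) (a : ℕ) : μ.parts.count a * a ≤ n := by
  have h := Multiset.sum_filter_add_sum_filter_not (s := μ.parts) (· = a)
  rw [Multiset.filter_eq', Multiset.sum_replicate, smul_eq_mul, μ.parts_sum] at h
  omega

def ones (n : ℕ) : n.Partition where
  parts := Multiset.replicate n 1
  parts_pos hi := by rw [Multiset.eq_of_mem_replicate hi]; exact one_pos
  parts_sum := by simp

@[simp]
theorem card_parts_ones (n : ℕ) : Multiset.card (ones n).parts = n :=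
  Multiset.card_replicate n 1

def scaleEquiv {c : ℕ} (hc : 0 < c) :
    n.Partition ≃ {μ : (c * n).Partition // ∀ i ∈ μ.parts, c ∣ i} where
  toFun ν := ⟨⟨ν.parts.map (c * ·), by simpa using fun _ hi => ⟨hc, ν.parts_pos hi⟩,
    by rw [Multiset.sum_map_mul_left, Multiset.map_id', ν.parts_sum]⟩, by simp⟩
  invFun μ := ⟨μ.1.parts.map (· / c), by
    simpa using fun i hi => Nat.div_pos (Nat.le_of_dvd (μ.1.parts_pos hi) (μ.2 i hi)) hc, by
    refine Nat.eq_of_mul_eq_mul_left hc ?_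
    rw [← Multiset.sum_map_mul_left,
      Multiset.map_congr rfl fun i hi => Nat.mul_div_cancel' (μ.2 i hi), Multiset.map_id',
      μ.1.parts_sum]⟩
  left_inv ν := by ext1; simp [Multiset.map_map, Nat.mul_div_cancel_left _ hc]
  right_inv μ := by
    ext1; ext1
    simp only [Multiset.map_map, Function.comp_def]
    exact (Multiset.map_congr rfl fun i hi => Nat.mul_div_cancel' (μ.2 i hi)).trans
      (Multiset.map_id' _)

@[simp]
theorem scaleEquiv_apply_parts {c : ℕ} (hc : 0 < c) (ν : n.Partition) :
    (scaleEquiv hc ν).1.parts = ν.parts.map (c * ·) := rfl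

@[simp]
theorem scaleEquiv_symm_apply_parts {c : ℕ} (hc : 0 < c)
    (μ : {μ : (c * n).Partition // ∀ i ∈ μ.parts, c ∣ i}) :
    ((scaleEquiv hc).symm μ).parts = μ.1.parts.map (· / c) := rfl

end Nat.Partition

namespace Polynomial

theorem one_add_X_dvd_one_add_X_pow {R : Type*} [CommRing R] {m : ℕ} (hm : Odd m) :
    (1 + X : R[X]) ∣ 1 + X ^ m := by
  simpa using Odd.add_dvd_pow_add_pow (1 : R[X]) X hm

theorem eval_pos_of_leadingCoeff_pos {P : ℝ[X]} {a : ℝ} (hP : 0 < P.leadingCoeff)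
    (hroot : ∀ x, a ≤ x → ¬P.IsRoot x) : 0 < P.eval a := by
  obtain ⟨b, hab, hb⟩ : ∃ b, a ≤ b ∧ 0 < P.eval b := by
    rcases le_or_gt P.degree 0 with hdeg | hdeg
    · have hconst : P.coeff 0 = P.leadingCoeff := by
        rw [leadingCoeff, natDegree_eq_zero_iff_degree_le_zero.2 hdeg]
      refine ⟨a, le_rfl, ?_⟩
      rwa [eq_C_of_degree_le_zero hdeg, eval_C, hconst]
    · exact ((tendsto_atTop_of_leadingCoeff_nonneg P hdeg hP.le).eventually_gt_atTop 0 |>.and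
        (Filter.eventually_ge_atTop a)).exists.imp fun b hb => ⟨hb.2, hb.1⟩
  by_contra! ha
  obtain ⟨c, hc, hc0⟩ := intermediate_value_Icc hab P.continuous.continuousOn ⟨ha, hb.le⟩
  exact hroot c hc.1 hc0

theorem eval_one_pos_of_dvd {p q : ℤ[X]} (hp : 0 < p.leadingCoeff) (hpq : p ∣ q)
    (hq : ∀ x : ℝ, 1 ≤ x → 0 < aeval x q) : 0 < p.eval 1 := by
  have hP : 0 < (p.map (Int.castRingHom ℝ)).leadingCoeff := by
    rw [leadingCoeff_map_of_injective (RingHom.injective_int _), eq_intCast]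
    exact_mod_cast hp
  have h := eval_pos_of_leadingCoeff_pos (a := 1) hP fun x hx hroot => by
    obtain ⟨r, rfl⟩ := hpq
    rw [IsRoot, eval_map, ← algebraMap_int_eq, ← aeval_def] at hroot
    simpa [hroot] using hq x hx
  simpa using h

end Polynomial

theorem mem_terParts {n : ℕ} {μ : n.Partition} :
    μ ∈ terParts n ↔ ∀ i ∈ μ.parts, ∃ k, i = 3 ^ k := by
  simp [terParts]

theorem ones_mem_terParts (n : ℕ) : Nat.Partition.ones n ∈ terParts n :=
  mem_terParts.2 fun _ hi => ⟨0, Multiset.eq_of_mem_replicate hi⟩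

def terExps (n : ℕ) : Finset ℕ := (range (n + 1)).filter (fun k => 3 ^ k ≤ n)

def terFloorSum (n : ℕ) : ℕ := ∑ k ∈ terExps n, n / 3 ^ k

theorem le_terFloorSum (n : ℕ) : n ≤ terFloorSum n := by
  rcases n.eq_zero_or_pos with rfl | hn
  · exact le_rfl
  · have h0 : 0 ∈ terExps n := by
      simp only [terExps, mem_filter, mem_range, pow_zero]
      omega
    simpa [terFloorSum] using
      single_le_sum (f := fun k => n / 3 ^ k) (fun _ _ => Nat.zero_le _) h0

section TernaryPartition

variable {n : ℕ} {μ : n.Partition}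

theorem three_dvd_of_mem_parts (hμ : μ ∈ terParts n) (h1 : 1 ∉ μ.parts) {i : ℕ}
    (hi : i ∈ μ.parts) : 3 ∣ i := by
  obtain ⟨k, rfl⟩ := mem_terParts.1 hμ i hi
  exact dvd_pow_self 3 fun hk => h1 (by simpa [hk] using hi)

theorem one_mem_parts_of_not_dvd (hμ : μ ∈ terParts n) (hn : ¬3 ∣ n) : 1 ∈ μ.parts := by
  by_contra h1
  rw [← μ.parts_sum] at hn
  exact hn (Multiset.dvd_sum fun i hi => three_dvd_of_mem_parts hμ h1 hi)

theorem sum_count_pow_three_eq_card (hμ : μ ∈ terParts n) :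
    ∑ k ∈ terExps n, μ.parts.count (3 ^ k) = Multiset.card μ.parts := by
  rw [← Multiset.sum_count_eq_card (s := (terExps n).image (3 ^ ·)), sum_image]
  · exact fun x _ y _ h => Nat.pow_right_injective (by norm_num : 2 ≤ 3) h
  · intro i hi
    obtain ⟨k, rfl⟩ := mem_terParts.1 hμ i hi
    have hk := Nat.Partition.le_of_mem_parts hi
    have := Nat.lt_pow_self (n := k) (a := 3) (by norm_num)
    simp only [mem_image, terExps, mem_filter, mem_range]
    exact ⟨k, ⟨by omega, hk⟩, rfl⟩

theorem sum_hT_exponents (hμ : μ ∈ terParts n) :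
    ∑ k ∈ terExps n, (n / 3 ^ k - μ.parts.count (3 ^ k)) =
      terFloorSum n - Multiset.card μ.parts := by
  rw [sum_tsub_distrib _ fun k _ => (Nat.le_div_iff_mul_le (by positivity)).2 (μ.count_mul_le _),
    sum_count_pow_three_eq_card hμ, terFloorSum]

theorem hT_eval_one (hμ : μ ∈ terParts n) :
    (hT n μ).eval 1 = 2 ^ (terFloorSum n - Multiset.card μ.parts) := by
  rw [← sum_hT_exponents hμ, ← prod_pow_eq_pow_sum, hT, eval_prod]
  simp only [eval_pow, eval_add, eval_one, eval_X, one_pow, one_add_one_eq_two]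
  rfl

theorem one_add_X_pow_dvd_hT (hμ : μ ∈ terParts n) :
    (1 + X : ℤ[X]) ^ (terFloorSum n - Multiset.card μ.parts) ∣ hT n μ := by
  rw [← sum_hT_exponents hμ, ← prod_pow_eq_pow_sum]
  exact prod_dvd_prod_of_dvd _ _ fun k _ =>
    pow_dvd_pow_of_dvd (one_add_X_dvd_one_add_X_pow (Odd.pow (by decide))) _

theorem hT_aeval_pos (μ : n.Partition) {x : ℝ} (hx : 0 ≤ x) : 0 < aeval x (hT n μ) := by
  simp only [hT, map_prod, map_pow, map_add, map_one, aeval_X]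
  exact prod_pos fun k _ => by positivity

end TernaryPartition

theorem GT_eval_one_pos (n : ℕ) : 0 < (GT n).eval 1 := by
  have hones : GT n ∣ hT n (.ones n) := gcd_dvd (ones_mem_terParts n)
  have hne : GT n ≠ 0 := fun h => by
    have h0 : hT n (.ones n) = 0 := zero_dvd_iff.1 (h ▸ hones)
    have := hT_eval_one (ones_mem_terParts n)
    rw [h0, eval_zero] at this
    exact pow_ne_zero _ two_ne_zero this.symm
  -- `normalize` on `ℤ[X]` fixes the sign of the leading coefficient, not the constant term.
  have hlc : 0 ≤ (GT n).leadingCoeff := by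
    refine Int.nonneg_of_normalize_eq_self ?_
    rw [← leadingCoeff_normalize, GT, Finset.normalize_gcd]
  exact eval_one_pos_of_dvd (hlc.lt_of_ne' (leadingCoeff_ne_zero.2 hne)) hones
    fun x hx => hT_aeval_pos _ (by linarith)

theorem GT_eval_one (n : ℕ) : (GT n).eval 1 = 2 ^ (terFloorSum n - n) := by
  have hones : GT n ∣ hT n (.ones n) := gcd_dvd (ones_mem_terParts n)
  have hpow : (1 + X : ℤ[X]) ^ (terFloorSum n - n) ∣ GT n := dvd_gcd fun μ hμ =>
    (pow_dvd_pow _ (by have := μ.card_parts_le; omega)).trans (one_add_X_pow_dvd_hT hμ)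
  refine Int.dvd_antisymm (GT_eval_one_pos n).le (by positivity) ?_ ?_
  · simpa [hT_eval_one (ones_mem_terParts n)] using eval_dvd (x := 1) hones
  · simpa [one_add_one_eq_two] using eval_dvd (x := 1) hpow

noncomputable def terWeight (n : ℕ) : ℤ :=
  ∑ μ ∈ terParts n, 2 ^ (n - Multiset.card μ.parts)

theorem numT_eval_one (n : ℕ) : (numT n).eval 1 = terWeight n := by
  have h := congrArg (eval 1) (GT_dvd_sum n).choose_spec
  have hsum : ∑ μ ∈ terParts n, (hT n μ).eval 1 = 2 ^ (terFloorSum n - n) * terWeight n := by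
    rw [terWeight, mul_sum]
    refine sum_congr rfl fun μ hμ => ?_
    have := μ.card_parts_le
    have := le_terFloorSum n
    rw [hT_eval_one hμ, ← pow_add]
    congr 1
    omega
  rw [eval_mul, eval_finsetSum, GT_eval_one, hsum] at h
  exact (mul_left_cancel₀ (by positivity) h).symm

theorem terWeight_zero : terWeight 0 = 1 := by
  simp [terWeight, terParts]

theorem tT_eq_terWeight (n : ℕ) : tT n = terWeight n := by
  unfold tT
  split_ifs with hn
  · rw [hn, terWeight_zero]
  · exact numT_eval_one n

theorem sum_terParts_filter_one_mem {n : ℕ} (hn : 1 ≤ n) :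
    ∑ μ ∈ (terParts n).filter (1 ∈ ·.parts), (2 : ℤ) ^ (n - Multiset.card μ.parts) =
      terWeight (n - 1) := by
  let e := Nat.Partition.partitionWithPartEquiv le_rfl hn
  refine sum_bij' (fun μ hμ => e ⟨μ, (mem_filter.1 hμ).2⟩) (fun ν _ => (e.symm ν).1)
    (fun μ hμ => ?_) (fun ν hν => ?_) (fun μ hμ => ?_) (fun ν hν => ?_) (fun μ hμ => ?_)
  · rw [mem_filter, mem_terParts] at hμ
    simpa [e, mem_terParts] using fun i hi => hμ.1 i (Multiset.mem_of_mem_erase hi)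
  · rw [mem_terParts] at hν
    simpa [e, mem_terParts] using ⟨⟨0, rfl⟩, hν⟩
  · simp only [Equiv.symm_apply_apply]
  · simp only [Subtype.coe_eta, Equiv.apply_symm_apply]
  · have h1 := (mem_filter.1 hμ).2
    have hcard := μ.card_parts_le
    have hpos := Multiset.card_pos_iff_exists_mem.2 ⟨1, h1⟩
    simp only [e, Nat.Partition.partitionWithPartEquiv_apply_parts, Multiset.card_erase_of_mem h1,
      Nat.pred_eq_sub_one]
    congr 1
    omega

theorem sum_terParts_filter_one_notMem (m : ℕ) :
    ∑ μ ∈ (terParts (3 * m)).filter (1 ∉ ·.parts), (2 : ℤ) ^ (3 * m - Multiset.card μ.parts) =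
      4 ^ m * terWeight m := by
  let e := Nat.Partition.scaleEquiv (n := m) three_pos
  rw [terWeight, mul_sum]
  refine (sum_bij' (fun ν _ => (e ν).1)
    (fun μ hμ => e.symm
      ⟨μ, fun _ => three_dvd_of_mem_parts (mem_filter.1 hμ).1 (mem_filter.1 hμ).2⟩)
    (fun ν hν => ?_) (fun μ hμ => ?_) (fun ν hν => ?_) (fun μ hμ => ?_) (fun ν hν => ?_)).symm
  · rw [mem_terParts] at hν
    refine mem_filter.2 ⟨mem_terParts.2 ?_, ?_⟩
    · simpa [e] using fun i hi => by
        obtain ⟨k, rfl⟩ := hν i hi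
        exact ⟨k + 1, (pow_succ' 3 k).symm⟩
    · simp [e]
  · obtain ⟨hμ, h1⟩ := mem_filter.1 hμ
    refine mem_terParts.2 fun j hj => ?_
    simp only [e, Nat.Partition.scaleEquiv_symm_apply_parts, Multiset.mem_map] at hj
    obtain ⟨i, hi, rfl⟩ := hj
    obtain ⟨k, rfl⟩ := mem_terParts.1 hμ i hi
    obtain _ | k := k
    · exact absurd hi (by simpa using h1)
    · exact ⟨k, by rw [pow_succ', Nat.mul_div_cancel_left _ three_pos]⟩
  · simp only [Subtype.coe_eta, Equiv.symm_apply_apply]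
  · simp only [Equiv.apply_symm_apply]
  · have hcard := ν.card_parts_le
    simp only [e, Nat.Partition.scaleEquiv_apply_parts, Multiset.card_map]
    rw [show (4 : ℤ) = 2 ^ 2 by norm_num, ← pow_mul, ← pow_add]
    congr 1
    omega

theorem terWeight_eq_of_not_dvd {n : ℕ} (hn : ¬3 ∣ n) : terWeight n = terWeight (n - 1) := by
  rw [← sum_terParts_filter_one_mem (by omega),
    filter_true_of_mem fun μ hμ => one_mem_parts_of_not_dvd hμ hn, terWeight]

theorem terWeight_three_mul {m : ℕ} (hm : m ≠ 0) :
    terWeight (3 * m) = terWeight (3 * m - 1) + 4 ^ m * terWeight m := by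
  rw [← sum_terParts_filter_one_mem (by omega), ← sum_terParts_filter_one_notMem,
    sum_filter_add_sum_filter_not, terWeight]

/-- `t(3n) = t(3n+1) = t(3n+2)` for every `n ≥ 0`, and
`t(3n) − t(3n−2) = 2^{2n}·t(n)` for every `n ≥ 1`. -/
theorem tT_blocks_and_recurrence :
    (∀ n : ℕ, tT (3 * n) = tT (3 * n + 1) ∧ tT (3 * n + 1) = tT (3 * n + 2)) ∧
    (∀ n : ℕ, 1 ≤ n → tT (3 * n) - tT (3 * n - 2) = 2 ^ (2 * n) * tT n) := by
  simp only [tT_eq_terWeight]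
  refine ⟨fun n => ⟨?_, ?_⟩, fun n hn => ?_⟩
  · rw [terWeight_eq_of_not_dvd (n := 3 * n + 1) (by omega)]
    rfl
  · rw [terWeight_eq_of_not_dvd (n := 3 * n + 2) (by omega)]
    rfl
  · rw [terWeight_three_mul (by omega), terWeight_eq_of_not_dvd (n := 3 * n - 1) (by omega),
      Nat.sub_sub, pow_mul]
    norm_num
end

section
/- Let n, d ≥ 1 be integers, write n = a·d + r with a := ⌊n/d⌋ and 0 ≤ r < d, and let ζ_{2d} := e^{πi/d}. Then num(n, ζ_{2d}) ≠ 0 if and only if num(r, ζ_{2d}) ≠ 0; indeed num(n, ζ_{2d}) = C·num(r, ζ_{2d}) for some nonzero complex number C (depending only on n and d). -/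
open Polynomial Finset

/-- `h_λ(x) = ∏_{i=1}^{n} (1+x^i)^(⌊n/i⌋ - m_λ(i))` in `ℤ[x]`, where `m_λ(i)` is the
multiplicity of the part `i` in the partition `λ` of `n`. -/
noncomputable def hPoly (n : ℕ) (μ : Nat.Partition n) : Polynomial ℤ :=
  ∏ i ∈ Finset.Icc 1 n, (1 + X ^ i) ^ (n / i - μ.parts.count i)

/-- `G(n,x)`: the (normalized) gcd of the `h_λ(x)` over all partitions `λ` of `n`. -/
noncomputable def GPoly (n : ℕ) : Polynomial ℤ :=
  Finset.univ.gcd (hPoly n)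

theorem GPoly_dvd_sum (n : ℕ) :
    ∃ q : Polynomial ℤ, (∑ μ : Nat.Partition n, hPoly n μ) = GPoly n * q :=
  exists_eq_mul_right_of_dvd
    (Finset.dvd_sum fun μ _ => Finset.gcd_dvd (Finset.mem_univ μ))

/-- `num(n,x) = (∑_{λ ⊢ n} h_λ(x)) / G(n,x)`. -/
noncomputable def numPoly (n : ℕ) : Polynomial ℤ :=
  (GPoly_dvd_sum n).choose

theorem GPoly_dvd_prod (n : ℕ) :
    ∃ q : Polynomial ℤ,
      (∏ i ∈ Finset.Icc 1 n, ((1 : Polynomial ℤ) + X ^ i) ^ (n / i)) = GPoly n * q :=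
  exists_eq_mul_right_of_dvd <|
    dvd_trans (Finset.gcd_dvd (Finset.mem_univ (Nat.Partition.indiscrete n)))
      (Finset.prod_dvd_prod_of_dvd _ _ fun _ _ => pow_dvd_pow _ (Nat.sub_le _ _))

/-- `den(n,x) = (∏_{i=1}^{n} (1+x^i)^⌊n/i⌋) / G(n,x)`. -/
noncomputable def denPoly (n : ℕ) : Polynomial ℤ :=
  (GPoly_dvd_prod n).choose


/-!
Let `ζ` be a primitive `2d`-th root of unity. Then `1 + ζ ^ i = 0` exactly when `i` is an odd
multiple of `d`, and such a root is simple, so the order of vanishing of `h_λ` at `ζ` is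
`∑ (⌊n/i⌋ - m_λ(i))` over the odd multiples `i ≤ n` of `d`. Since a part `3d, 5d, …` costs at
least three parts `d`, at most `⌊n/d⌋` parts of `λ` are odd multiples of `d`, with equality only
when `λ` consists of `⌊n/d⌋` parts `d` together with a partition `μ` of `r = n mod d`. Those `λ`
have `h_λ = R · h_μ` for a fixed `R`, and vanish to the minimal order `e` (`h_μ(ζ) ≠ 0` as all
parts of `μ` are `< d`); all other `h_λ` vanish to higher order. So `G(n)` and `R · G(r)` both
vanish to order exactly `e`, and dividing `G(n) · num(n) = R · G(r) · num(r) + (higher order)`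
by `(x - ζ)^e` and evaluating at `ζ` gives `num(n)(ζ) = C · num(r)(ζ)` with `C ≠ 0`.
-/

theorem IsPrimitiveRoot.pow_eq_neg_one_iff {K : Type*} [CommRing K] [IsDomain K] {ζ : K}
    {d : ℕ} (hζ : IsPrimitiveRoot ζ (2 * d)) (hd : 0 < d) (i : ℕ) :
    ζ ^ i = -1 ↔ i % (2 * d) = d := by
  have hζd : ζ ^ d = -1 := by
    have := hζ.pow_of_dvd hd.ne' (dvd_mul_left d 2)
    rw [Nat.mul_div_cancel _ hd] at this
    exact this.eq_neg_one_of_two_right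
  rw [← hζd, (hζ.isOfFinOrder (by omega)).pow_inj_mod, ← hζ.eq_orderOf,
    Nat.mod_eq_of_lt (by omega : d < 2 * d)]

theorem Complex.isPrimitiveRoot_exp_pi_mul_I_div (d : ℕ) (hd : d ≠ 0) :
    IsPrimitiveRoot (Complex.exp (Real.pi * Complex.I / d)) (2 * d) := by
  convert Complex.isPrimitiveRoot_exp (2 * d) (by omega) using 2
  push_cast
  field_simp

namespace Polynomial

theorem rootMultiplicity_prod {R ι : Type*} [CommRing R] [IsDomain R] (s : Finset ι)
    (f : ι → R[X]) (hf : ∀ i ∈ s, f i ≠ 0) (x : R) :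
    rootMultiplicity x (∏ i ∈ s, f i) = ∑ i ∈ s, rootMultiplicity x (f i) := by
  classical
  induction s using Finset.induction_on with
  | empty => simp
  | insert a s ha ih =>
    rw [prod_insert ha, sum_insert ha, rootMultiplicity_mul,
      ih fun i hi => hf i (mem_insert_of_mem hi)]
    exact mul_ne_zero (hf a (mem_insert_self a s))
      (prod_ne_zero_iff.mpr fun i hi => hf i (mem_insert_of_mem hi))

theorem rootMultiplicity_pow {R : Type*} [CommRing R] [IsDomain R] (p : R[X]) (k : ℕ) (x : R) :
    rootMultiplicity x (p ^ k) = k * rootMultiplicity x p := by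
  classical
  rw [← count_roots, roots_pow, Multiset.count_nsmul, count_roots]

theorem monic_one_add_X_pow {R : Type*} [CommRing R] {i : ℕ} (hi : i ≠ 0) :
    (1 + X ^ i : R[X]).Monic := by
  rw [add_comm, ← C_1]
  exact monic_X_pow_add_C 1 hi

open Classical in
theorem rootMultiplicity_one_add_X_pow {K : Type*} [Field K] [CharZero K] (x : K) {i : ℕ}
    (hi : i ≠ 0) : rootMultiplicity x (1 + X ^ i) = if x ^ i = -1 then 1 else 0 := by
  have hsep : (1 + X ^ i : K[X]).Separable := by
    rw [add_comm, ← sub_neg_eq_add, ← C_1, ← C_neg]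
    exact separable_X_pow_sub_C _ (Nat.cast_ne_zero.mpr hi) (neg_ne_zero.mpr one_ne_zero)
  split_ifs with hx
  · refine le_antisymm (rootMultiplicity_le_one_of_separable hsep x) ?_
    refine (rootMultiplicity_pos (monic_one_add_X_pow hi).ne_zero).mpr ?_
    simp [hx]
  · refine rootMultiplicity_eq_zero fun hroot => hx ?_
    have : 1 + x ^ i = 0 := by simpa using hroot
    linear_combination this

theorem exists_eval_eq_mul_eval_of_mul_eq_add {K : Type*} [Field K] {ζ : K}
    {A B N M E : K[X]} (hA : A ≠ 0) (hB : B ≠ 0)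
    (hAB : rootMultiplicity ζ A = rootMultiplicity ζ B)
    (hE : (X - C ζ) ^ (rootMultiplicity ζ B + 1) ∣ E) (h : A * N = B * M + E) :
    ∃ c ≠ 0, N.eval ζ = c * M.eval ζ := by
  obtain ⟨a, hAa, ha⟩ := exists_eq_pow_rootMultiplicity_mul_and_not_dvd A hA ζ
  obtain ⟨b, hBb, hb⟩ := exists_eq_pow_rootMultiplicity_mul_and_not_dvd B hB ζ
  obtain ⟨E', rfl⟩ := hE
  rw [dvd_iff_isRoot, IsRoot.def] at ha hb
  rw [hAB] at hAa
  generalize rootMultiplicity ζ B = e at *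
  have hcancel : a * N = b * M + (X - C ζ) * E' := by
    refine mul_left_cancel₀ (pow_ne_zero e (X_sub_C_ne_zero ζ)) ?_
    calc _ = A * N := by rw [hAa, mul_assoc]
      _ = _ := h
      _ = _ := by rw [hBb]; ring
  have hζ := congrArg (eval ζ) hcancel
  simp only [eval_mul, eval_add, eval_sub, eval_X, eval_C, sub_self, zero_mul, add_zero] at hζ
  refine ⟨eval ζ b / eval ζ a, div_ne_zero hb ha, ?_⟩
  field_simp
  linear_combination hζ

end Polynomial

/-- The odd multiples of `d` in `[1, n]`; for a primitive `2d`-th root of unity `ζ`, these index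
the factors `1 + X ^ i` of `hPoly n` that vanish at `ζ`. -/
def oddMultiples (d n : ℕ) : Finset ℕ :=
  (Icc 1 n).filter (fun i => i % (2 * d) = d)

section OneAddXPow

open Polynomial

variable {R K : Type*} [CommRing R] [Field K]

theorem monic_prod_one_add_X_pow (n : ℕ) (c : ℕ → ℕ) :
    (∏ i ∈ Icc 1 n, (1 + X ^ i : R[X]) ^ c i).Monic :=
  monic_prod_of_monic _ _ fun i hi =>
    (monic_one_add_X_pow (by simp at hi; omega)).pow _

theorem rootMultiplicity_map_prod_one_add_X_pow [CharZero K] {ζ : K} {d : ℕ}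
    (hζ : IsPrimitiveRoot ζ (2 * d)) (hd : 0 < d) (n : ℕ) (c : ℕ → ℕ) :
    rootMultiplicity ζ ((∏ i ∈ Icc 1 n, (1 + X ^ i : ℤ[X]) ^ c i).map (algebraMap ℤ K)) =
      ∑ i ∈ oddMultiples d n, c i := by
  have hi : ∀ i ∈ Icc 1 n, i ≠ 0 := fun i hi => by simp at hi; omega
  simp only [Polynomial.map_prod, Polynomial.map_pow, Polynomial.map_add, Polynomial.map_one,
    Polynomial.map_X]
  rw [rootMultiplicity_prod _ _ fun i hi' => ((monic_one_add_X_pow (hi i hi')).pow _).ne_zero,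
    oddMultiples, sum_filter]
  refine sum_congr rfl fun i hi' => ?_
  rw [rootMultiplicity_pow, rootMultiplicity_one_add_X_pow _ (hi i hi'), hζ.pow_eq_neg_one_iff hd]
  split_ifs <;> simp

theorem one_add_X_pow_dvd_one_add_X_pow {d i : ℕ} (h : i % (2 * d) = d) :
    (1 + X ^ d : R[X]) ∣ 1 + X ^ i := by
  have hi : i = d * (2 * (i / (2 * d)) + 1) := by
    have := Nat.div_add_mod i (2 * d)
    rw [h] at this
    linarith
  have hodd : Odd (2 * (i / (2 * d)) + 1) := odd_two_mul_add_one _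
  simpa [← pow_mul, ← hi] using hodd.add_dvd_pow_add_pow (1 : R[X]) (X ^ d)

theorem one_add_X_pow_pow_sum_dvd_prod (d n : ℕ) (c : ℕ → ℕ) :
    (1 + X ^ d : R[X]) ^ (∑ i ∈ oddMultiples d n, c i) ∣ ∏ i ∈ Icc 1 n, (1 + X ^ i) ^ c i := by
  rw [← prod_pow_eq_pow_sum]
  refine (prod_dvd_prod_of_dvd _ _ fun i hi => ?_).trans
    (prod_dvd_prod_of_subset _ _ _ (filter_subset _ _))
  exact pow_dvd_pow_of_dvd (one_add_X_pow_dvd_one_add_X_pow (mem_filter.mp hi).2) _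

theorem X_sub_C_pow_dvd_map {ζ : K} {d k : ℕ} (hζ : IsPrimitiveRoot ζ (2 * d)) (hd : 0 < d)
    {p : ℤ[X]} (hp : (1 + X ^ d) ^ k ∣ p) : (X - C ζ) ^ k ∣ p.map (algebraMap ℤ K) := by
  have hroot : X - C ζ ∣ (1 + X ^ d : ℤ[X]).map (algebraMap ℤ K) := by
    rw [dvd_iff_isRoot]
    simp [(hζ.pow_eq_neg_one_iff hd d).mpr (Nat.mod_eq_of_lt (by omega))]
  have := Polynomial.map_dvd (algebraMap ℤ K) hp
  rw [Polynomial.map_pow] at this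
  exact (pow_dvd_pow_of_dvd hroot k).trans this

end OneAddXPow

theorem Multiset.sum_count_mul_le (P : Multiset ℕ) (t : Finset ℕ) :
    ∑ i ∈ t, P.count i * i ≤ P.sum :=
  calc ∑ i ∈ t, P.count i * i ≤ ∑ i ∈ t ∪ P.toFinset, P.count i • i :=
        sum_le_sum_of_subset subset_union_left
    _ = P.sum := (sum_multiset_count_of_subset P _ subset_union_right).symm

section OddMultiples

variable {n d i : ℕ}

theorem le_of_mem_oddMultiples (hi : i ∈ oddMultiples d n) : d ≤ i := by
  have := (mem_filter.mp hi).2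
  have := Nat.mod_le i (2 * d)
  omega

theorem three_mul_le_of_mem_oddMultiples (hi : i ∈ oddMultiples d n) (hid : i ≠ d) :
    3 * d ≤ i := by
  have hmod := (mem_filter.mp hi).2
  have := Nat.div_add_mod i (2 * d)
  rcases Nat.eq_zero_or_pos (i / (2 * d)) with h | h
  · rw [h] at this; omega
  · nlinarith

theorem self_mem_oddMultiples (hd : 0 < d) (hdn : d ≤ n) : d ∈ oddMultiples d n :=
  mem_filter.mpr ⟨mem_Icc.mpr ⟨hd, hdn⟩, Nat.mod_eq_of_lt (by omega)⟩

theorem oddMultiples_eq_empty (hnd : n < d) : oddMultiples d n = ∅ :=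
  eq_empty_of_forall_notMem fun i hi => by
    have := le_of_mem_oddMultiples hi
    have := (mem_Icc.mp (mem_filter.mp hi).1).2
    omega

end OddMultiples

namespace Nat.Partition

variable {n d : ℕ}

theorem count_le_div_s13 (l : n.Partition) {i : ℕ} (hi : 0 < i) : l.parts.count i ≤ n / i := by
  have := Multiset.sum_count_mul_le l.parts {i}
  rwa [sum_singleton, l.parts_sum, ← Nat.le_div_iff_mul_le hi] at this

theorem count_add_three_mul_sum_count_le (l : n.Partition) (hd : 0 < d) :
    l.parts.count d + 3 * ∑ i ∈ (oddMultiples d n).erase d, l.parts.count i ≤ n / d := by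
  rw [Nat.le_div_iff_mul_le hd]
  calc (l.parts.count d + 3 * ∑ i ∈ (oddMultiples d n).erase d, l.parts.count i) * d
      = l.parts.count d * d + ∑ i ∈ (oddMultiples d n).erase d, l.parts.count i * (3 * d) := by
        rw [add_mul, mul_comm 3, mul_assoc, sum_mul]
    _ ≤ l.parts.count d * d + ∑ i ∈ (oddMultiples d n).erase d, l.parts.count i * i := by
        gcongr with i hi
        exact three_mul_le_of_mem_oddMultiples (mem_of_mem_erase hi) (ne_of_mem_erase hi)
    _ = ∑ i ∈ insert d ((oddMultiples d n).erase d), l.parts.count i * i := by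
        rw [sum_insert (notMem_erase _ _)]
    _ ≤ n := (Multiset.sum_count_mul_le l.parts _).trans_eq l.parts_sum

theorem sum_count_oddMultiples_le_count_add (l : n.Partition) :
    ∑ i ∈ oddMultiples d n, l.parts.count i ≤
      l.parts.count d + ∑ i ∈ (oddMultiples d n).erase d, l.parts.count i := by
  calc ∑ i ∈ oddMultiples d n, l.parts.count i
      ≤ ∑ i ∈ insert d ((oddMultiples d n).erase d), l.parts.count i :=
        sum_le_sum_of_subset (insert_erase_subset _ _)
    _ = _ := sum_insert (notMem_erase _ _)

theorem sum_count_oddMultiples_le (l : n.Partition) (hd : 0 < d) :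
    ∑ i ∈ oddMultiples d n, l.parts.count i ≤ n / d := by
  have := l.count_add_three_mul_sum_count_le hd
  have := l.sum_count_oddMultiples_le_count_add (d := d)
  omega

theorem sum_count_oddMultiples_lt (l : n.Partition) (hd : 0 < d) (h : l.parts.count d < n / d) :
    ∑ i ∈ oddMultiples d n, l.parts.count i < n / d := by
  have := l.count_add_three_mul_sum_count_le hd
  have := l.sum_count_oddMultiples_le_count_add (d := d)
  omega

end Nat.Partition

/-- The common order of vanishing at a primitive `2d`-th root of unity of the `hPoly n l`
for partitions `l` containing `n / d` parts equal to `d`; every other `hPoly n l` vanishes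
there to higher order. -/
def minVanishingOrder (n d : ℕ) : ℕ :=
  ∑ i ∈ oddMultiples d n, n / i - n / d

def liftPartition {n : ℕ} (d : ℕ) (μ : (n % d).Partition) : n.Partition where
  parts := Multiset.replicate (n / d) d + μ.parts
  parts_pos {i} hi := by
    rcases Multiset.mem_add.mp hi with h | h
    · obtain ⟨hnd, rfl⟩ := Multiset.mem_replicate.mp h
      exact Nat.pos_of_ne_zero fun h0 => hnd (by simp [h0])
    · exact μ.parts_pos h
  parts_sum := by
    rw [Multiset.sum_add, Multiset.sum_replicate, smul_eq_mul, μ.parts_sum, Nat.div_add_mod']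

noncomputable def liftFactor (n d : ℕ) : ℤ[X] :=
  ∏ i ∈ Icc 1 n, (1 + X ^ i) ^ (n / i - n % d / i - if i = d then n / d else 0)

namespace Nat.Partition

variable {n d : ℕ}

theorem minVanishingOrder_le (l : n.Partition) (hd : 0 < d) :
    minVanishingOrder n d ≤ ∑ i ∈ oddMultiples d n, (n / i - l.parts.count i) := by
  rw [minVanishingOrder, sum_tsub_distrib _ fun i hi =>
    l.count_le_div_s13 (hd.trans_le (le_of_mem_oddMultiples hi))]
  exact Nat.sub_le_sub_left (l.sum_count_oddMultiples_le hd) _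

theorem minVanishingOrder_lt (l : n.Partition) (hd : 0 < d) (h : l.parts.count d < n / d) :
    minVanishingOrder n d < ∑ i ∈ oddMultiples d n, (n / i - l.parts.count i) := by
  have hdn : d ≤ n := by
    by_contra hnd
    simp [Nat.div_eq_of_lt (not_le.mp hnd)] at h
  have h1 : n / d ≤ ∑ i ∈ oddMultiples d n, n / i :=
    single_le_sum (fun _ _ => Nat.zero_le _) (self_mem_oddMultiples hd hdn)
  have h2 := l.sum_count_oddMultiples_lt hd h
  rw [minVanishingOrder, sum_tsub_distrib _ fun i hi =>
    l.count_le_div_s13 (hd.trans_le (le_of_mem_oddMultiples hi))]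
  omega

end Nat.Partition

theorem hPoly_eq_prod_Icc {m n : ℕ} (hmn : m ≤ n) (μ : m.Partition) :
    hPoly m μ = ∏ i ∈ Icc 1 n, (1 + X ^ i) ^ (m / i - μ.parts.count i) :=
  prod_subset (Icc_subset_Icc_right hmn) fun i hi hi' => by
    rw [Nat.div_eq_of_lt (by simp at hi hi'; omega), Nat.zero_sub, pow_zero]

theorem one_add_X_pow_pow_dvd_hPoly {n : ℕ} (d : ℕ) (l : n.Partition) :
    (1 + X ^ d) ^ (∑ i ∈ oddMultiples d n, (n / i - l.parts.count i)) ∣ hPoly n l :=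
  one_add_X_pow_pow_sum_dvd_prod d n _

theorem one_add_X_pow_pow_minVanishingOrder_dvd_GPoly {n d : ℕ} (hd : 0 < d) :
    (1 + X ^ d) ^ minVanishingOrder n d ∣ GPoly n :=
  Finset.dvd_gcd fun l _ => (pow_dvd_pow _ (l.minVanishingOrder_le hd)).trans
    (one_add_X_pow_pow_dvd_hPoly d l)

section Lift

variable {n d : ℕ}

theorem count_liftPartition (μ : (n % d).Partition) (i : ℕ) :
    (liftPartition d μ).parts.count i = (if d = i then n / d else 0) + μ.parts.count i := by
  rw [liftPartition, Multiset.count_add, Multiset.count_replicate]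

theorem liftPartition_injective : Function.Injective (liftPartition (n := n) d) :=
  fun _ _ h => Nat.Partition.ext (add_left_cancel (congrArg Nat.Partition.parts h))

theorem image_liftPartition :
    univ.image (liftPartition d) =
      univ.filter fun l : n.Partition => Multiset.replicate (n / d) d ≤ l.parts := by
  ext l
  simp only [mem_image, mem_filter, mem_univ, true_and]
  constructor
  · rintro ⟨μ, rfl⟩
    exact Multiset.le_add_right _ _
  · intro h
    have hsum := congrArg Multiset.sum (add_tsub_cancel_of_le h)
    rw [Multiset.sum_add, Multiset.sum_replicate, smul_eq_mul, l.parts_sum] at hsum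
    refine ⟨⟨l.parts - Multiset.replicate (n / d) d,
      fun hi => l.parts_pos (Multiset.mem_of_le tsub_le_self hi), ?_⟩,
      Nat.Partition.ext (add_tsub_cancel_of_le h)⟩
    have := Nat.div_add_mod' n d
    omega

theorem hPoly_liftPartition (μ : (n % d).Partition) :
    hPoly n (liftPartition d μ) = liftFactor n d * hPoly (n % d) μ := by
  rw [hPoly_eq_prod_Icc (Nat.mod_le n d), hPoly, liftFactor, ← prod_mul_distrib]
  refine prod_congr rfl fun i hi => ?_
  have hi0 : 0 < i := (mem_Icc.mp hi).1
  have hμ := μ.count_le_div_s13 hi0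
  have hmod : n % d / i ≤ n / i := Nat.div_le_div_right (Nat.mod_le n d)
  rw [← pow_add, count_liftPartition]
  congr 1
  by_cases hid : i = d
  · subst hid
    have : n % i / i = 0 := Nat.div_eq_of_lt (Nat.mod_lt _ hi0)
    simp only [if_true]
    omega
  · simp only [hid, Ne.symm hid, if_false]
    omega

theorem sum_hPoly_eq_liftFactor_mul_add (hd : 0 < d) :
    ∃ E : ℤ[X], (1 + X ^ d) ^ (minVanishingOrder n d + 1) ∣ E ∧
      ∑ l : n.Partition, hPoly n l =
        liftFactor n d * ∑ μ : (n % d).Partition, hPoly (n % d) μ + E := by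
  refine ⟨∑ l ∈ univ.filter fun l : n.Partition => ¬Multiset.replicate (n / d) d ≤ l.parts,
    hPoly n l, dvd_sum fun l hl => ?_, ?_⟩
  · have hlt : l.parts.count d < n / d := by
      rw [← not_le, Multiset.le_count_iff_replicate_le]
      exact (mem_filter.mp hl).2
    exact (pow_dvd_pow _ (l.minVanishingOrder_lt hd hlt)).trans (one_add_X_pow_pow_dvd_hPoly d l)
  · rw [← sum_filter_add_sum_filter_not univ fun l : n.Partition =>
      Multiset.replicate (n / d) d ≤ l.parts, ← image_liftPartition,
      sum_image fun _ _ _ _ h => liftPartition_injective h, mul_sum]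
    simp only [hPoly_liftPartition]

end Lift

theorem GPoly_mul_numPoly (n : ℕ) : GPoly n * numPoly n = ∑ l : n.Partition, hPoly n l :=
  (GPoly_dvd_sum n).choose_spec.symm

section RootMultiplicity

variable {K : Type*} [Field K] {ζ : K} {m n d : ℕ}

theorem monic_hPoly (l : m.Partition) : (hPoly m l).Monic :=
  monic_prod_one_add_X_pow _ _

theorem monic_liftFactor (n d : ℕ) : (liftFactor n d).Monic :=
  monic_prod_one_add_X_pow _ _

theorem rootMultiplicity_map_GPoly_le (l : m.Partition) :
    rootMultiplicity ζ ((GPoly m).map (algebraMap ℤ K)) ≤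
      rootMultiplicity ζ ((hPoly m l).map (algebraMap ℤ K)) :=
  rootMultiplicity_le_rootMultiplicity_of_dvd ((monic_hPoly l).map _).ne_zero
    (Polynomial.map_dvd _ (gcd_dvd (mem_univ l))) ζ

variable [CharZero K]

theorem map_GPoly_ne_zero (m : ℕ) : (GPoly m).map (algebraMap ℤ K) ≠ 0 :=
  (Polynomial.map_ne_zero_iff (RingHom.injective_int _)).mpr fun h =>
    (monic_hPoly (.indiscrete m)).ne_zero (gcd_eq_zero_iff.mp h _ (mem_univ _))

theorem rootMultiplicity_map_hPoly_of_lt (hζ : IsPrimitiveRoot ζ (2 * d)) (hd : 0 < d)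
    (hm : m < d) (μ : m.Partition) :
    rootMultiplicity ζ ((hPoly m μ).map (algebraMap ℤ K)) = 0 := by
  rw [hPoly, rootMultiplicity_map_prod_one_add_X_pow hζ hd, oddMultiples_eq_empty hm, sum_empty]

theorem rootMultiplicity_map_GPoly_of_lt (hζ : IsPrimitiveRoot ζ (2 * d)) (hd : 0 < d)
    (hm : m < d) : rootMultiplicity ζ ((GPoly m).map (algebraMap ℤ K)) = 0 :=
  Nat.eq_zero_of_le_zero <| (rootMultiplicity_map_GPoly_le (.indiscrete m)).trans_eq
    (rootMultiplicity_map_hPoly_of_lt hζ hd hm _)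

theorem rootMultiplicity_map_liftFactor (hζ : IsPrimitiveRoot ζ (2 * d)) (hd : 0 < d)
    (hdn : d ≤ n) :
    rootMultiplicity ζ ((liftFactor n d).map (algebraMap ℤ K)) = minVanishingOrder n d := by
  have hrem : ∀ i ∈ oddMultiples d n, n % d / i = 0 := fun i hi =>
    Nat.div_eq_of_lt ((Nat.mod_lt n hd).trans_le (le_of_mem_oddMultiples hi))
  rw [liftFactor, rootMultiplicity_map_prod_one_add_X_pow hζ hd, minVanishingOrder]
  calc ∑ i ∈ oddMultiples d n, (n / i - n % d / i - if i = d then n / d else 0)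
      = ∑ i ∈ oddMultiples d n, (n / i - if i = d then n / d else 0) :=
        sum_congr rfl fun i hi => by rw [hrem i hi, Nat.sub_zero]
    _ = ∑ i ∈ oddMultiples d n, n / i - ∑ i ∈ oddMultiples d n, if i = d then n / d else 0 :=
        sum_tsub_distrib _ fun i _ => by split_ifs with h <;> simp [h]
    _ = _ := by rw [sum_ite_eq', if_pos (self_mem_oddMultiples hd hdn)]

theorem rootMultiplicity_map_GPoly (hζ : IsPrimitiveRoot ζ (2 * d)) (hd : 0 < d) (hdn : d ≤ n) :
    rootMultiplicity ζ ((GPoly n).map (algebraMap ℤ K)) = minVanishingOrder n d := by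
  refine le_antisymm ?_ ((le_rootMultiplicity_iff (map_GPoly_ne_zero n)).mpr
    (X_sub_C_pow_dvd_map hζ hd (one_add_X_pow_pow_minVanishingOrder_dvd_GPoly hd)))
  refine (rootMultiplicity_map_GPoly_le (liftPartition d (.indiscrete (n % d)))).trans_eq ?_
  rw [hPoly_liftPartition, Polynomial.map_mul,
    rootMultiplicity_mul (((monic_liftFactor n d).map _).mul ((monic_hPoly _).map _)).ne_zero,
    rootMultiplicity_map_liftFactor hζ hd hdn,
    rootMultiplicity_map_hPoly_of_lt hζ hd (Nat.mod_lt n hd), add_zero]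

end RootMultiplicity

theorem exists_aeval_numPoly_eq_mul {K : Type*} [Field K] [CharZero K] {ζ : K} {d : ℕ}
    (hζ : IsPrimitiveRoot ζ (2 * d)) (hd : 0 < d) (n : ℕ) :
    ∃ c : K, c ≠ 0 ∧ aeval ζ (numPoly n) = c * aeval ζ (numPoly (n % d)) := by
  rcases lt_or_ge n d with hnd | hdn
  · exact ⟨1, one_ne_zero, by rw [Nat.mod_eq_of_lt hnd, one_mul]⟩
  obtain ⟨E, hE, hsum⟩ := sum_hPoly_eq_liftFactor_mul_add (n := n) hd
  have h : GPoly n * numPoly n = liftFactor n d * GPoly (n % d) * numPoly (n % d) + E := by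
    rw [GPoly_mul_numPoly, hsum, mul_assoc, GPoly_mul_numPoly]
  have hB : (liftFactor n d).map (algebraMap ℤ K) * (GPoly (n % d)).map (algebraMap ℤ K) ≠ 0 :=
    mul_ne_zero ((monic_liftFactor n d).map _).ne_zero (map_GPoly_ne_zero _)
  have hνB : rootMultiplicity ζ ((liftFactor n d).map (algebraMap ℤ K) *
      (GPoly (n % d)).map (algebraMap ℤ K)) = minVanishingOrder n d := by
    rw [rootMultiplicity_mul hB, rootMultiplicity_map_liftFactor hζ hd hdn,
      rootMultiplicity_map_GPoly_of_lt hζ hd (Nat.mod_lt n hd), add_zero]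
  obtain ⟨c, hc, hN⟩ := exists_eval_eq_mul_eval_of_mul_eq_add (map_GPoly_ne_zero n) hB
    (by rw [hνB, rootMultiplicity_map_GPoly hζ hd hdn]) (hνB ▸ X_sub_C_pow_dvd_map hζ hd hE)
    (by simpa only [Polynomial.map_mul, Polynomial.map_add] using
      congrArg (Polynomial.map (algebraMap ℤ K)) h)
  exact ⟨c, hc, by simpa only [eval_map_algebraMap] using hN⟩

theorem numPoly_remainder_reduction_general (n d : ℕ) (hd : 1 ≤ d) :
    (Polynomial.aeval (Complex.exp (Real.pi * Complex.I / (d : ℂ))) (numPoly n) ≠ 0 ↔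
      Polynomial.aeval (Complex.exp (Real.pi * Complex.I / (d : ℂ))) (numPoly (n % d)) ≠ 0) ∧
    ∃ C : ℂ, C ≠ 0 ∧
      Polynomial.aeval (Complex.exp (Real.pi * Complex.I / (d : ℂ))) (numPoly n) =
        C * Polynomial.aeval (Complex.exp (Real.pi * Complex.I / (d : ℂ)))
              (numPoly (n % d)) := by
  obtain ⟨C, hC, h⟩ :=
    exists_aeval_numPoly_eq_mul (Complex.isPrimitiveRoot_exp_pi_mul_I_div d (by omega)) hd n
  exact ⟨by rw [h]; exact ⟨right_ne_zero_of_mul, mul_ne_zero hC⟩, C, hC, h⟩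

/-- Remainder reduction: for `n, d ≥ 1`, writing `n = a·d + r` with `a = ⌊n/d⌋` and
`0 ≤ r < d` (i.e. `r = n % d`), and `ζ_{2d} := e^{πi/d}`, we have
`num(n, ζ_{2d}) ≠ 0 ↔ num(r, ζ_{2d}) ≠ 0`; indeed `num(n, ζ_{2d}) = C · num(r, ζ_{2d})`
for some nonzero complex number `C`. -/
theorem numPoly_remainder_reduction (n d : ℕ) (hn : 1 ≤ n) (hd : 1 ≤ d) :
    (Polynomial.aeval (Complex.exp (Real.pi * Complex.I / (d : ℂ))) (numPoly n) ≠ 0 ↔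
      Polynomial.aeval (Complex.exp (Real.pi * Complex.I / (d : ℂ))) (numPoly (n % d)) ≠ 0) ∧
    ∃ C : ℂ, C ≠ 0 ∧
      Polynomial.aeval (Complex.exp (Real.pi * Complex.I / (d : ℂ))) (numPoly n) =
        C * Polynomial.aeval (Complex.exp (Real.pi * Complex.I / (d : ℂ)))
              (numPoly (n % d)) :=
  numPoly_remainder_reduction_general n d hd
end
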